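/- arXiv:2208.00743 — 2 statements merged into one kernel-verified Lean document; each statement's English description precedes it below -/
import Mathlib

section
/- For every integer n ≥ 3, in Γ_n the detour eccentricity of the vertex 0 is 2^{n-1} − 1, the detour eccentricity of every vertex u ≠ 0 is 2^{n-1}, and consequently the detour radius of Γ_n is 2^{n-1} − 1 and the detour diameter of Γ_n is 2^{n-1}. -/
/-!
Every vertex outside the clique `P(n) = Gamma.low n` is a leaf attached to `0`, so it can occur
on a path only as an endpoint. A path from `0` therefore either stays inside `P(n)` (at most
`2^(n-1) - 1` edges) or is a single edge to a leaf; a path from any other vertex meets at most one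
leaf besides the clique, or starts with the edge from a leaf to `0`, giving at most `2^(n-1)`
edges. Hamiltonian paths of the clique, extended by one leaf edge where possible, attain these
bounds.
-/

open Finset

/-- The graph Γ_n: distinct vertices u, v ∈ {0,…,2^n−1} are adjacent iff
(u < 2^(n-1) and v < 2^(n-1)), or u = 0, or v = 0. -/
def Gamma (n : ℕ) : SimpleGraph (Fin (2 ^ n)) :=
  SimpleGraph.fromRel
    (fun u v => (u.val < 2 ^ (n - 1) ∧ v.val < 2 ^ (n - 1)) ∨ u.val = 0 ∨ v.val = 0)

/-- The detour distance between two vertices: the maximum length of a path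
(a walk with no repeated vertices) between them. -/
noncomputable def detourDist {V : Type*} (G : SimpleGraph V) (u v : V) : ℕ :=
  sSup {k : ℕ | ∃ p : G.Walk u v, p.IsPath ∧ p.length = k}

/-- The detour eccentricity of a vertex u: the maximum of d_D(u,v) over all v ≠ u. -/
noncomputable def detourEcc (n : ℕ) (u : Fin (2 ^ n)) : ℕ :=
  (univ.filter (fun v : Fin (2 ^ n) => v ≠ u)).sup (detourDist (Gamma n) u)

namespace SimpleGraph

variable {V : Type*} {G : SimpleGraph V}

theorem Walk.IsPath.length_add_one_le_card [DecidableEq V] {u v : V} {p : G.Walk u v}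
    (hp : p.IsPath) {s : Finset V} (hs : ∀ w ∈ p.support, w ∈ s) : p.length + 1 ≤ s.card := by
  rw [← p.length_support, ← List.toFinset_card_of_nodup hp.support_nodup]
  exact Finset.card_le_card fun w hw => hs w (List.mem_toFinset.mp hw)

theorem Walk.IsPath.eq_or_eq_of_neighborSet_subset {w z : V} (hw : G.neighborSet w ⊆ {z}) :
    ∀ {u v : V} (p : G.Walk u v), p.IsPath → w ∈ p.support → w = u ∨ w = v
  | _, _, .nil, _, hmem => .inl (by simpa using hmem)
  | u, v, .cons h q, hp, hmem => by
    rw [Walk.cons_isPath_iff] at hp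
    rcases List.mem_cons.mp (Walk.support_cons h q ▸ hmem) with rfl | hmem
    · exact .inl rfl
    rcases hp.1.eq_or_eq_of_neighborSet_subset hw q hmem with rfl | rfl
    · have hu : u = z := hw h.symm
      cases q with
      | nil => exact .inr rfl
      | cons h' q' =>
        have : _ = z := hw h'
        subst hu this
        exact (hp.2 (by simp)).elim
    · exact .inr rfl

theorem Walk.IsPath.exists_tail_of_neighborSet_subset {u v z : V} (hu : G.neighborSet u ⊆ {z})
    (huv : u ≠ v) {p : G.Walk u v} (hp : p.IsPath) :
    ∃ q : G.Walk z v, q.IsPath ∧ p.length = q.length + 1 := by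
  cases p with
  | nil => exact absurd rfl huv
  | cons h q =>
    have : _ = z := hu h
    subst this
    exact ⟨q, (Walk.cons_isPath_iff h q).mp hp |>.1, rfl⟩

theorem Walk.exists_support_eq {l : List V} (hchain : l.IsChain G.Adj) {a b : V}
    (ha : l.head? = some a) (hb : l.getLast? = some b) : ∃ p : G.Walk a b, p.support = l := by
  have hne : l ≠ [] := by rintro rfl; simp at ha
  have ha' : l.head hne = a := by simpa [List.head?_eq_some_head hne] using ha
  have hb' : l.getLast hne = b := by simpa [List.getLast?_eq_some_getLast hne] using hb
  exact ⟨(Walk.ofSupport l hne hchain).copy ha' hb', by simp⟩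

theorem IsClique.exists_isPath_length_eq_card_sub_one [DecidableEq V] {s : Finset V}
    (hs : G.IsClique (s : Set V))
    {a b : V} (ha : a ∈ s) (hb : b ∈ s) (hab : a ≠ b) :
    ∃ p : G.Walk a b, p.IsPath ∧ p.length = s.card - 1 ∧ ∀ w ∈ p.support, w ∈ s := by
  have hnodup : (a :: (((s.erase a).erase b).toList ++ [b])).Nodup := by
    simp [List.nodup_cons, List.nodup_append, hab, Finset.nodup_toList]
    tauto
  have hsub : ∀ w ∈ a :: (((s.erase a).erase b).toList ++ [b]), w ∈ s := by
    simp only [List.mem_cons, List.mem_append, Finset.mem_toList, Finset.mem_erase]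
    grind
  have hchain := (hnodup.pairwise_of_forall_ne fun x hx y hy hxy =>
    hs (hsub x hx) (hsub y hy) hxy).isChain
  obtain ⟨p, hp⟩ := Walk.exists_support_eq (b := b) hchain rfl
    (by simp [List.getLast?_cons, List.getLast?_append])
  refine ⟨p, by rwa [Walk.isPath_def, hp], ?_, by rwa [hp]⟩
  have hb' : b ∈ s.erase a := Finset.mem_erase.mpr ⟨hab.symm, hb⟩
  rw [← Nat.add_sub_cancel p.length 1, ← Walk.length_support, hp]
  have : 1 < s.card := Finset.one_lt_card.mpr ⟨a, ha, b, hb, hab⟩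
  simp only [List.length_cons, List.length_append, Finset.length_toList, List.length_nil,
    Finset.card_erase_of_mem hb', Finset.card_erase_of_mem ha]
  omega

end SimpleGraph

namespace SimpleGraph

variable {V : Type*} {G : SimpleGraph V} {u v : V}

theorem Walk.IsPath.length_le_detourDist [Fintype V] {p : G.Walk u v} (hp : p.IsPath) :
    p.length ≤ detourDist G u v :=
  le_csSup ⟨Fintype.card V, by rintro _ ⟨q, hq, rfl⟩; exact hq.length_lt.le⟩ ⟨p, hp, rfl⟩

theorem detourDist_le {u v : V} {k : ℕ} (h : ∀ p : G.Walk u v, p.IsPath → p.length ≤ k) :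
    detourDist G u v ≤ k :=
  csSup_le' <| by rintro _ ⟨p, hp, rfl⟩; exact h p hp

end SimpleGraph

namespace Gamma

open SimpleGraph

variable {n : ℕ}

theorem adj_iff {u v : Fin (2 ^ n)} : (Gamma n).Adj u v ↔
    u ≠ v ∧ ((u.val < 2 ^ (n - 1) ∧ v.val < 2 ^ (n - 1)) ∨ u.val = 0 ∨ v.val = 0) := by
  simp only [Gamma, fromRel_adj]
  tauto

variable (n) in
def low : Finset (Fin (2 ^ n)) := {v | v.val < 2 ^ (n - 1)}

theorem mem_low {v : Fin (2 ^ n)} : v ∈ low n ↔ v.val < 2 ^ (n - 1) := by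
  simp [low]

theorem zero_mem_low : (⟨0, Nat.two_pow_pos n⟩ : Fin (2 ^ n)) ∈ low n :=
  mem_low.mpr (Nat.two_pow_pos _)

theorem one_mem_low (hn : 2 ≤ n) :
    (⟨1, Nat.one_lt_two_pow (by omega)⟩ : Fin (2 ^ n)) ∈ low n :=
  mem_low.mpr (Nat.one_lt_two_pow (by omega))

theorem card_low : (low n).card = 2 ^ (n - 1) := by
  rw [low, Fin.card_filter_val_lt]
  exact min_eq_right (Nat.pow_le_pow_right two_pos (n.sub_le 1))

theorem isClique_low : (Gamma n).IsClique (low n : Set (Fin (2 ^ n))) := by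
  intro u hu v hv huv
  exact adj_iff.mpr ⟨huv, .inl ⟨mem_low.mp hu, mem_low.mp hv⟩⟩

theorem neighborSet_subset_of_notMem_low {w : Fin (2 ^ n)} (hw : w ∉ low n) :
    (Gamma n).neighborSet w ⊆ {⟨0, Nat.two_pow_pos n⟩} := by
  intro x hx
  rw [mem_low] at hw
  rw [mem_neighborSet, adj_iff] at hx
  rw [Set.mem_singleton_iff, Fin.ext_iff]
  show x.val = 0
  have := Nat.two_pow_pos (n - 1)
  omega

theorem support_subset_insert_low {u v : Fin (2 ^ n)} (hu : u ∈ low n) {p : (Gamma n).Walk u v}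
    (hp : p.IsPath) : ∀ w ∈ p.support, w ∈ insert v (low n) := by
  intro w hw
  by_cases hwl : w ∈ low n
  · exact Finset.mem_insert_of_mem hwl
  rcases hp.eq_or_eq_of_neighborSet_subset (neighborSet_subset_of_notMem_low hwl) p hw with
    rfl | rfl
  · exact absurd hu hwl
  · exact Finset.mem_insert_self _ _

theorem path_length_le_of_mem_low {u v : Fin (2 ^ n)} (hu : u ∈ low n) {p : (Gamma n).Walk u v}
    (hp : p.IsPath) : p.length ≤ 2 ^ (n - 1) := by
  have := hp.length_add_one_le_card (support_subset_insert_low hu hp)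
  have := Finset.card_insert_le v (low n)
  rw [card_low] at *
  omega

theorem path_length_le_of_start_zero (hn : 2 ≤ n) {v : Fin (2 ^ n)}
    {p : (Gamma n).Walk ⟨0, Nat.two_pow_pos n⟩ v} (hp : p.IsPath) :
    p.length ≤ 2 ^ (n - 1) - 1 := by
  have h0 := zero_mem_low (n := n)
  by_cases hv : v ∈ low n
  · have := hp.length_add_one_le_card (s := low n)
      (by simpa [hv] using support_subset_insert_low h0 hp)
    rw [card_low] at this
    omega
  · obtain ⟨q, hq, hlen⟩ := hp.reverse.exists_tail_of_neighborSet_subset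
      (neighborSet_subset_of_notMem_low hv) (by rintro rfl; exact hv h0)
    have := (Walk.isPath_iff_nil.mp hq).length_eq_zero
    have : 2 ≤ 2 ^ (n - 1) := Nat.le_self_pow (by omega) 2
    rw [Walk.length_reverse] at hlen
    omega

theorem path_length_le (hn : 2 ≤ n) {u v : Fin (2 ^ n)} {p : (Gamma n).Walk u v}
    (hp : p.IsPath) :
    p.length ≤ 2 ^ (n - 1) := by
  by_cases hu : u ∈ low n
  · exact path_length_le_of_mem_low hu hp
  by_cases huv : u = v
  · subst huv
    simp [(Walk.isPath_iff_nil.mp hp).length_eq_zero]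
  obtain ⟨q, hq, hlen⟩ := hp.exists_tail_of_neighborSet_subset
    (neighborSet_subset_of_notMem_low hu) huv
  have := path_length_le_of_start_zero hn hq
  have : 1 ≤ 2 ^ (n - 1) := Nat.one_le_two_pow
  omega

theorem exists_isPath_of_mem_low {a b : Fin (2 ^ n)} (ha : a ∈ low n) (hb : b ∈ low n)
    (hab : a ≠ b) : ∃ p : (Gamma n).Walk a b,
      p.IsPath ∧ p.length = 2 ^ (n - 1) - 1 ∧ ∀ w ∈ p.support, w ∈ low n :=
  card_low (n := n) ▸ isClique_low.exists_isPath_length_eq_card_sub_one ha hb hab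

end Gamma

open SimpleGraph Gamma

variable {n : ℕ}

theorem le_detourEcc {u v : Fin (2 ^ n)} (hvu : v ≠ u) {p : (Gamma n).Walk u v}
    (hp : p.IsPath) : p.length ≤ detourEcc n u :=
  hp.length_le_detourDist.trans (Finset.le_sup (by simpa using hvu))

theorem detourEcc_le {u : Fin (2 ^ n)} {k : ℕ}
    (h : ∀ v (p : (Gamma n).Walk u v), p.IsPath → p.length ≤ k) : detourEcc n u ≤ k :=
  Finset.sup_le fun v _ => detourDist_le (h v)

theorem detourEcc_zero (hn : 2 ≤ n) :
    detourEcc n ⟨0, Nat.two_pow_pos n⟩ = 2 ^ (n - 1) - 1 := by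
  refine le_antisymm (detourEcc_le fun _ _ hp => path_length_le_of_start_zero hn hp) ?_
  obtain ⟨p, hp, hlen, -⟩ := exists_isPath_of_mem_low zero_mem_low (one_mem_low hn) (by simp)
  exact hlen ▸ le_detourEcc (by simp) hp

theorem detourEcc_of_ne_zero (hn : 2 ≤ n) {u : Fin (2 ^ n)} (hu : u.val ≠ 0) :
    detourEcc n u = 2 ^ (n - 1) := by
  refine le_antisymm (detourEcc_le fun _ _ hp => path_length_le hn hp) ?_
  by_cases hul : u ∈ low n
  -- u ⋯ 0 through the whole clique, then out to the leaf 2^(n-1)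
  · obtain ⟨p, hp, hlen, hsupp⟩ := exists_isPath_of_mem_low hul zero_mem_low
      (Fin.ne_of_val_ne hu)
    have hm : 2 ^ (n - 1) < 2 ^ n := Nat.pow_lt_pow_right one_lt_two (by omega)
    have hadj : (Gamma n).Adj ⟨0, Nat.two_pow_pos n⟩ ⟨2 ^ (n - 1), hm⟩ :=
      adj_iff.mpr ⟨Fin.ne_of_val_ne (Nat.two_pow_pos _).ne, .inr (.inl rfl)⟩
    have hq := hp.concat (fun hmem => (mem_low.mp (hsupp _ hmem)).false) hadj
    have hlen' : (p.concat hadj).length = 2 ^ (n - 1) := by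
      have := Nat.two_pow_pos (n - 1)
      rw [Walk.length_concat, hlen]
      omega
    exact hlen' ▸ le_detourEcc (by rintro rfl; exact (mem_low.mp hul).false) hq
  -- from the leaf u to 0, then through the whole clique
  · obtain ⟨p, hp, hlen, hsupp⟩ := exists_isPath_of_mem_low zero_mem_low (one_mem_low hn)
      (by simp)
    have hadj : (Gamma n).Adj u ⟨0, Nat.two_pow_pos n⟩ :=
      adj_iff.mpr ⟨Fin.ne_of_val_ne hu, .inr (.inr rfl)⟩
    have hq := hp.cons (fun hmem => hul (hsupp _ hmem)) (h := hadj)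
    have hlen' : (Walk.cons hadj p).length = 2 ^ (n - 1) := by
      have := Nat.two_pow_pos (n - 1)
      rw [Walk.length_cons, hlen]
      omega
    exact hlen' ▸ le_detourEcc (by rintro rfl; exact hul (one_mem_low hn)) hq

theorem range_detourEcc (hn : 2 ≤ n) :
    Set.range (detourEcc n) = {2 ^ (n - 1) - 1, 2 ^ (n - 1)} := by
  ext k
  constructor
  · rintro ⟨u, rfl⟩
    by_cases hu : u.val = 0
    · obtain rfl : u = ⟨0, Nat.two_pow_pos n⟩ := Fin.ext hu
      exact .inl (detourEcc_zero hn)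
    · exact .inr (detourEcc_of_ne_zero hn hu)
  · rintro (rfl | rfl)
    exacts [⟨_, detourEcc_zero hn⟩,
      ⟨_, detourEcc_of_ne_zero hn (u := ⟨1, Nat.one_lt_two_pow (by omega)⟩) one_ne_zero⟩]

/-- For every n ≥ 3: in Γ_n the detour eccentricity of 0 is 2^(n-1) − 1, the detour
eccentricity of every other vertex is 2^(n-1), the detour radius is 2^(n-1) − 1 and
the detour diameter is 2^(n-1). -/
theorem stmt_16 (n : ℕ) (hn : 3 ≤ n) :
    detourEcc n ⟨0, Nat.two_pow_pos n⟩ = 2 ^ (n - 1) - 1 ∧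
    (∀ u : Fin (2 ^ n), u.val ≠ 0 → detourEcc n u = 2 ^ (n - 1)) ∧
    sInf (Set.range (detourEcc n)) = 2 ^ (n - 1) - 1 ∧
    sSup (Set.range (detourEcc n)) = 2 ^ (n - 1) := by
  have hn₂ : 2 ≤ n := by omega
  refine ⟨detourEcc_zero hn₂, fun _ => detourEcc_of_ne_zero hn₂, ?_, ?_⟩
  · rw [range_detourEcc hn₂, csInf_pair]
    exact inf_of_le_left (Nat.sub_le _ 1)
  · rw [range_detourEcc hn₂, csSup_pair]
    exact sup_of_le_right (Nat.sub_le _ 1)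
end

section
/- For every integer n ≥ 3, the vertex 0 is the unique interior vertex of Γ_n and also the unique center vertex of Γ_n; that is, Int(Γ_n) = C(Γ_n) = {0}: the vertex 0 has eccentricity equal to the radius 1 while every other vertex has eccentricity 2, and 0 is the only vertex v such that for every vertex u ≠ v there exists a vertex w ≠ v with d(u,w) = d(u,v) + d(v,w). -/
/-- The eccentricity of a vertex: the greatest (shortest-path) distance from it
to any vertex. -/
noncomputable def ecc (n : ℕ) (v : Fin (2 ^ n)) : ℕ :=
  Finset.univ.sup fun u => (Gamma n).dist v u

/-- A vertex v is an interior vertex if for every vertex u ≠ v there exists a vertex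
w ≠ v such that v lies between u and w, i.e. d(u,w) = d(u,v) + d(v,w). -/
def IsInterior (n : ℕ) (v : Fin (2 ^ n)) : Prop :=
  ∀ u : Fin (2 ^ n), u ≠ v → ∃ w : Fin (2 ^ n), w ≠ v ∧
    (Gamma n).dist u w = (Gamma n).dist u v + (Gamma n).dist v w

namespace SimpleGraph.IsUniversal

variable {V : Type*} {G : SimpleGraph V} {c u v w : V}

lemma dist_eq_one (hc : G.IsUniversal c) (hcv : c ≠ v) : G.dist c v = 1 :=
  dist_eq_one_iff_adj.mpr (hc hcv)

lemma dist_le_one (hc : G.IsUniversal c) (v : V) : G.dist c v ≤ 1 := by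
  rcases eq_or_ne c v with rfl | hcv
  · simp
  · exact (hc.dist_eq_one hcv).le

lemma dist_le_two (hc : G.IsUniversal c) (u v : V) : G.dist u v ≤ 2 :=
  calc G.dist u v ≤ G.dist u c + G.dist c v := (Connected.of_isUniversal hc).dist_triangle
    _ ≤ 1 + 1 := by
      rw [dist_comm (u := u)]
      exact add_le_add (hc.dist_le_one u) (hc.dist_le_one v)

lemma dist_eq_two (hc : G.IsUniversal c) (huv : u ≠ v) (hnadj : ¬G.Adj u v) :
    G.dist u v = 2 := by
  have hpos : 0 < G.dist u v := (Connected.of_isUniversal hc).pos_dist_of_ne huv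
  have hne_one : G.dist u v ≠ 1 := fun h => hnadj (dist_eq_one_iff_adj.mp h)
  have := hc.dist_le_two u v
  omega

lemma dist_lt_dist_add_dist (hc : G.IsUniversal c) (hcv : c ≠ v) (hvw : v ≠ w) :
    G.dist c w < G.dist c v + G.dist v w := by
  have hpos : 0 < G.dist v w := (Connected.of_isUniversal hc).pos_dist_of_ne hvw
  have := hc.dist_le_one w
  rw [hc.dist_eq_one hcv]
  omega

end SimpleGraph.IsUniversal

lemma gamma_adj {n : ℕ} {u v : Fin (2 ^ n)} :
    (Gamma n).Adj u v ↔ u ≠ v ∧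
      ((u.val < 2 ^ (n - 1) ∧ v.val < 2 ^ (n - 1)) ∨ u.val = 0 ∨ v.val = 0) := by
  simp only [Gamma, SimpleGraph.fromRel_adj]
  tauto

lemma isUniversal_gamma_zero (n : ℕ) : (Gamma n).IsUniversal ⟨0, Nat.two_pow_pos n⟩ :=
  fun _ h => gamma_adj.mpr ⟨h, Or.inr (Or.inl rfl)⟩

lemma exists_not_adj_gamma {n : ℕ} (hn : 2 ≤ n) {v : Fin (2 ^ n)} (hv : v.val ≠ 0) :
    ∃ w, v ≠ w ∧ ¬(Gamma n).Adj v w := by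
  have hhalf : 2 ^ (n - 1) < 2 ^ n := Nat.pow_lt_pow_right (by norm_num) (by omega)
  have htwo : 2 ≤ 2 ^ (n - 1) := Nat.le_self_pow (by omega) 2
  by_cases hvP : v.val < 2 ^ (n - 1)
  · refine ⟨⟨2 ^ (n - 1), hhalf⟩, fun h => by simp [h] at hvP, ?_⟩
    rw [gamma_adj]
    rintro ⟨-, ⟨-, h⟩ | h | h⟩ <;> simp_all
  · refine ⟨⟨1, by omega⟩, fun h => by simp [h] at hvP; omega, ?_⟩
    rw [gamma_adj]
    rintro ⟨-, ⟨h, -⟩ | h | h⟩ <;> simp_all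

lemma ecc_eq_of_forall_dist_le {n k : ℕ} {v : Fin (2 ^ n)}
    (hle : ∀ u, (Gamma n).dist v u ≤ k) (w : Fin (2 ^ n)) (hw : (Gamma n).dist v w = k) :
    ecc n v = k :=
  le_antisymm (Finset.sup_le fun u _ => hle u)
    (hw ▸ Finset.le_sup (f := fun u => (Gamma n).dist v u) (Finset.mem_univ w))

lemma ecc_zero {n : ℕ} (hn : 1 ≤ n) : ecc n ⟨0, Nat.two_pow_pos n⟩ = 1 := by
  have hone : 1 < 2 ^ n := Nat.one_lt_two_pow (by omega)
  exact ecc_eq_of_forall_dist_le (isUniversal_gamma_zero n).dist_le_one ⟨1, hone⟩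
    ((isUniversal_gamma_zero n).dist_eq_one (by simp [Fin.ext_iff]))

lemma ecc_eq_two_of_val_ne_zero {n : ℕ} (hn : 2 ≤ n) {v : Fin (2 ^ n)} (hv : v.val ≠ 0) :
    ecc n v = 2 := by
  obtain ⟨w, hvw, hnadj⟩ := exists_not_adj_gamma hn hv
  exact ecc_eq_of_forall_dist_le ((isUniversal_gamma_zero n).dist_le_two v) w
    ((isUniversal_gamma_zero n).dist_eq_two hvw hnadj)

lemma ecc_eq_one_iff {n : ℕ} (hn : 2 ≤ n) {v : Fin (2 ^ n)} :
    ecc n v = 1 ↔ v = ⟨0, Nat.two_pow_pos n⟩ := by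
  by_cases hv : v.val = 0
  · obtain rfl : v = ⟨0, Nat.two_pow_pos n⟩ := Fin.ext hv
    exact iff_of_true (ecc_zero (by omega)) rfl
  · simp [Fin.ext_iff, hv, ecc_eq_two_of_val_ne_zero hn hv]

lemma sInf_range_ecc {n : ℕ} (hn : 2 ≤ n) : sInf (Set.range (ecc n)) = 1 := by
  refine IsLeast.csInf_eq ⟨⟨_, ecc_zero (by omega)⟩, ?_⟩
  rintro _ ⟨v, rfl⟩
  by_cases hv : v.val = 0
  · exact ((ecc_eq_one_iff hn).mpr (Fin.ext hv)).ge
  · rw [ecc_eq_two_of_val_ne_zero hn hv]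
    omega

lemma isInterior_zero {n : ℕ} (hn : 2 ≤ n) : IsInterior n ⟨0, Nat.two_pow_pos n⟩ := by
  have hc := isUniversal_gamma_zero n
  intro u hu
  obtain ⟨w, huw, hnadj⟩ := exists_not_adj_gamma hn (fun h => hu (Fin.ext h))
  have hw : w ≠ ⟨0, Nat.two_pow_pos n⟩ := by
    rintro rfl
    exact hnadj (hc (Ne.symm hu)).symm
  refine ⟨w, hw, ?_⟩
  rw [hc.dist_eq_two huw hnadj, SimpleGraph.dist_comm, hc.dist_eq_one (Ne.symm hu),
    hc.dist_eq_one (Ne.symm hw)]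

lemma not_isInterior_of_ne_zero {n : ℕ} {v : Fin (2 ^ n)}
    (hv : v ≠ ⟨0, Nat.two_pow_pos n⟩) :
    ¬IsInterior n v := by
  intro hint
  obtain ⟨w, hwv, hdist⟩ := hint _ (Ne.symm hv)
  exact (isUniversal_gamma_zero n).dist_lt_dist_add_dist (Ne.symm hv) (Ne.symm hwv) |>.ne hdist

/-- For every n ≥ 3, the vertex 0 is the unique interior vertex and the unique center
vertex of Γ_n: 0 has eccentricity equal to the radius 1, every other vertex has
eccentricity 2, Int(Γ_n) = C(Γ_n) = {0}. -/
theorem stmt_18 (n : ℕ) (hn : 3 ≤ n) :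
    ecc n ⟨0, Nat.two_pow_pos n⟩ = 1 ∧
    sInf (Set.range (ecc n)) = 1 ∧
    (∀ v : Fin (2 ^ n), v.val ≠ 0 → ecc n v = 2) ∧
    {v : Fin (2 ^ n) | ecc n v = sInf (Set.range (ecc n))}
      = {(⟨0, Nat.two_pow_pos n⟩ : Fin (2 ^ n))} ∧
    {v : Fin (2 ^ n) | IsInterior n v}
      = {(⟨0, Nat.two_pow_pos n⟩ : Fin (2 ^ n))} := by
  have hn2 : 2 ≤ n := by omega
  refine ⟨ecc_zero (by omega), sInf_range_ecc hn2,
    fun v hv => ecc_eq_two_of_val_ne_zero hn2 hv, ?_, ?_⟩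
  · ext v
    rw [Set.mem_ofPred_eq, sInf_range_ecc hn2, ecc_eq_one_iff hn2, Set.mem_singleton_iff]
  · ext v
    rw [Set.mem_ofPred_eq, Set.mem_singleton_iff]
    exact ⟨fun hint => by_contra fun hv => not_isInterior_of_ne_zero hv hint,
      fun hv => hv ▸ isInterior_zero hn2⟩
end
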